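/- Let (d, r) be an arithmetical structure on a connected loopless graph G with n vertices, let L = diag(d) − A with A the adjacency matrix, and let L' be the (n−1)×(n−1) matrix resulting from the Keyes–Reiter operation at vertex v_n, i.e., ℓ'_{i,j} = ℓ_{i,j}·ℓ_{n,n} − ℓ_{i,n}·ℓ_{n,j} for i,j ∈ [n−1]. Then for all k ∈ [n−2], D_k(L') = d_n^{k−1}·D_{k+1}*(L), where D_k denotes the gcd of all k×k minors and D_k*(L) denotes the gcd of all k×k minors of L that include row n and column n. -/

import Mathlib

/-!
Chio's condensation. Writing a square matrix as `[[A, B], [C, a]]` with `a` a scalar block,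
`[[a, -B], [0, 1]] * [[A, B], [C, a]] = [[a A - B C, 0], [C, a]]`, so that
`a * det (chio M) = a ^ k * det M`. A minor of `chio L` on rows `I` and columns `J` is the
condensation of the minor of `L` on `I ∪ {n}` and `J ∪ {n}`, and every minor through the last row
and column is of this form up to a permutation of rows and columns. Hence, once `d_n = L n n` is
known to be nonzero, the `k × k` minors of `L'` are `d_n ^ (k - 1)` times the `(k+1) × (k+1)`
minors counted by `D*_{k+1}(L)`. Positivity of `d_n` comes from the last row of `L r = 0`:
`d_n r_n = ∑ⱼ A n j r_j`, and the last vertex has a neighbour since the graph is connected.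
-/
open Matrix

/-- `Dk B k` is the gcd of all `k × k` minors of `B`. -/
noncomputable def Dk {m n : ℕ} (B : Matrix (Fin m) (Fin n) ℤ) (k : ℕ) : ℤ :=
  Finset.univ.gcd fun p : (Fin k ↪ Fin m) × (Fin k ↪ Fin n) =>
    (B.submatrix p.1 p.2).det

/-- `DkStar B k` is the gcd of all `k × k` minors of `B` whose row set contains the
last row and whose column set contains the last column. -/
noncomputable def DkStar {m n : ℕ} (B : Matrix (Fin (m+1)) (Fin (n+1)) ℤ) (k : ℕ) : ℤ :=
  (Finset.univ.filter fun p : (Fin k ↪ Fin (m+1)) × (Fin k ↪ Fin (n+1)) =>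
    (∃ i, p.1 i = Fin.last m) ∧ (∃ j, p.2 j = Fin.last n)).gcd
    fun p => (B.submatrix p.1 p.2).det

/-- Chio condensation of an `(n+1) × (n+1)` matrix at the entry `(n,n)`. -/
def chio {n : ℕ} (L : Matrix (Fin (n+1)) (Fin (n+1)) ℤ) : Matrix (Fin n) (Fin n) ℤ :=
  fun i j => L i.castSucc j.castSucc * L (Fin.last n) (Fin.last n)
    - L i.castSucc (Fin.last n) * L (Fin.last n) j.castSucc

/-- gcd of the entries of the last row. -/
def lastRowGcd {n : ℕ} (L : Matrix (Fin (n+1)) (Fin (n+1)) ℤ) : ℤ :=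
  Finset.univ.gcd fun j => L (Fin.last n) j

theorem pow_card_mul_det_smul_sub_mul {R m o : Type*} [CommRing R] [Fintype m] [DecidableEq m]
    [Fintype o] [DecidableEq o] (A : Matrix m m R) (B : Matrix m o R)
    (C : Matrix o m R) (a : R) :
    a ^ Fintype.card o * (a • A - B * C).det
      = a ^ Fintype.card m * (fromBlocks A B C (a • 1)).det := by
  have hfactor : fromBlocks (a • 1) (-B) 0 1 * fromBlocks A B C (a • 1)
      = fromBlocks (a • A - B * C) 0 C (a • 1) := by
    rw [fromBlocks_multiply]
    simp [sub_eq_add_neg]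
  have h := congrArg det hfactor
  rw [det_mul, det_fromBlocks_zero₂₁, det_fromBlocks_zero₁₂] at h
  simp only [det_smul, det_one, mul_one] at h
  rw [h, mul_comm]

section Chio

variable {k : ℕ} (M : Matrix (Fin (k+1)) (Fin (k+1)) ℤ)

theorem chio_eq_smul_sub_mul :
    chio M = M (Fin.last k) (Fin.last k) • M.submatrix Fin.castSucc Fin.castSucc
      - M.submatrix Fin.castSucc (fun _ : Fin 1 => Fin.last k)
        * M.submatrix (fun _ : Fin 1 => Fin.last k) Fin.castSucc := by
  ext i j
  simp only [chio, Matrix.sub_apply, Matrix.smul_apply, submatrix_apply, mul_apply,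
    Fin.sum_univ_one, smul_eq_mul]
  ring

theorem submatrix_finSumFinEquiv_eq_fromBlocks :
    M.submatrix finSumFinEquiv finSumFinEquiv
      = fromBlocks (M.submatrix Fin.castSucc Fin.castSucc)
          (M.submatrix Fin.castSucc (fun _ : Fin 1 => Fin.last k))
          (M.submatrix (fun _ : Fin 1 => Fin.last k) Fin.castSucc)
          (M (Fin.last k) (Fin.last k) • 1) := by
  ext (i | i) (j | j) <;> simp [Fin.fin_one_eq_zero] <;> rfl

theorem mul_det_chio :
    M (Fin.last k) (Fin.last k) * (chio M).det = M (Fin.last k) (Fin.last k) ^ k * M.det := by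
  have h := pow_card_mul_det_smul_sub_mul (M.submatrix Fin.castSucc Fin.castSucc)
    (M.submatrix Fin.castSucc (fun _ : Fin 1 => Fin.last k))
    (M.submatrix (fun _ : Fin 1 => Fin.last k) Fin.castSucc) (M (Fin.last k) (Fin.last k))
  rwa [← chio_eq_smul_sub_mul, ← submatrix_finSumFinEquiv_eq_fromBlocks, det_submatrix_equiv_self,
    Fintype.card_fin, Fintype.card_fin, pow_one] at h

end Chio

section Minors

variable {k n : ℕ}

def snocLast (p : Fin k ↪ Fin n) : Fin (k+1) ↪ Fin (n+1) :=
  Fin.Embedding.snoc (p.trans Fin.castSuccEmb) (a := Fin.last n)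
    (by rintro ⟨i, hi⟩; exact Fin.castSucc_ne_last _ hi)

@[simp] theorem snocLast_last (p : Fin k ↪ Fin n) : snocLast p (Fin.last k) = Fin.last n :=
  Fin.Embedding.snoc_last

@[simp] theorem snocLast_castSucc (p : Fin k ↪ Fin n) (i : Fin k) :
    snocLast p i.castSucc = (p i).castSucc :=
  Fin.Embedding.snoc_castSucc

theorem submatrix_chio (L : Matrix (Fin (n+1)) (Fin (n+1)) ℤ) (p q : Fin k ↪ Fin n) :
    (chio L).submatrix p q = chio (L.submatrix (snocLast p) (snocLast q)) := by
  ext i j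
  simp [chio]

theorem exists_snocLast_eq_comp_swap (q : Fin (k+1) ↪ Fin (n+1)) {i₀ : Fin (k+1)}
    (hq : q i₀ = Fin.last n) :
    ∃ p : Fin k ↪ Fin n, ⇑(snocLast p) = q ∘ Equiv.swap i₀ (Fin.last k) := by
  set σ := Equiv.swap i₀ (Fin.last k)
  have hlast : q (σ (Fin.last k)) = Fin.last n := by rw [Equiv.swap_apply_right, hq]
  have hne : ∀ i : Fin k, q (σ i.castSucc) ≠ Fin.last n := fun i h =>
    Fin.castSucc_ne_last i (σ.injective (q.injective (h.trans hlast.symm)))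
  refine ⟨⟨fun i => (q (σ i.castSucc)).castPred (hne i), fun i j h => ?_⟩, ?_⟩
  · exact Fin.castSucc_injective _ (σ.injective (q.injective (Fin.castPred_inj.mp h)))
  · funext i
    induction i using Fin.lastCases with
    | last => simp [hlast]
    | cast i =>
      rw [Function.comp_apply, snocLast_castSucc]
      exact Fin.castSucc_castPred _ (hne i)

end Minors

theorem Finset.gcd_eq_gcd_of_forall_exists_dvd {α β γ : Type*} [CommMonoidWithZero α]
    [NormalizedGCDMonoid α] {s : Finset β} {t : Finset γ} {f : β → α} {g : γ → α}
    (hst : ∀ x ∈ s, ∃ y ∈ t, g y ∣ f x) (hts : ∀ y ∈ t, ∃ x ∈ s, f x ∣ g y) :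
    s.gcd f = t.gcd g :=
  dvd_antisymm_of_normalize_eq Finset.normalize_gcd Finset.normalize_gcd
    (Finset.dvd_gcd fun y hy => by
      obtain ⟨x, hx, hxy⟩ := hts y hy
      exact (Finset.gcd_dvd hx).trans hxy)
    (Finset.dvd_gcd fun x hx => by
      obtain ⟨y, hy, hyx⟩ := hst x hx
      exact (Finset.gcd_dvd hy).trans hyx)

theorem Matrix.associated_det_submatrix_perm {n R : Type*} [Fintype n] [DecidableEq n]
    [CommRing R] (M : Matrix n n R) (σ τ : Equiv.Perm n) :
    Associated (M.submatrix σ τ).det M.det := by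
  have hsplit : M.submatrix σ τ = (M.submatrix σ id).submatrix id τ := rfl
  rw [hsplit, det_permute', det_permute, ← mul_assoc]
  exact associated_unit_mul_left _ _
    (((Units.isUnit _).map (Int.castRingHom R)).mul ((Units.isUnit _).map (Int.castRingHom R)))

theorem DkStar_succ_eq_gcd_snocLast {k n : ℕ} (L : Matrix (Fin (n+1)) (Fin (n+1)) ℤ) :
    DkStar L (k+1) = Finset.univ.gcd fun p : (Fin k ↪ Fin n) × (Fin k ↪ Fin n) =>
      (L.submatrix (snocLast p.1) (snocLast p.2)).det := by
  refine Finset.gcd_eq_gcd_of_forall_exists_dvd (fun q hq => ?_) (fun p _ => ?_)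
  · obtain ⟨-, ⟨i₀, hi₀⟩, ⟨j₀, hj₀⟩⟩ := Finset.mem_filter.mp hq
    obtain ⟨p₁, hp₁⟩ := exists_snocLast_eq_comp_swap q.1 hi₀
    obtain ⟨p₂, hp₂⟩ := exists_snocLast_eq_comp_swap q.2 hj₀
    refine ⟨(p₁, p₂), Finset.mem_univ _, ?_⟩
    rw [hp₁, hp₂, ← submatrix_submatrix]
    exact (associated_det_submatrix_perm _ _ _).dvd
  · exact ⟨(snocLast p.1, snocLast p.2),
      Finset.mem_filter.mpr ⟨Finset.mem_univ _, ⟨_, snocLast_last _⟩, ⟨_, snocLast_last _⟩⟩,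
      dvd_rfl⟩

theorem det_chio_of_ne_zero {k : ℕ} (M : Matrix (Fin (k+1)) (Fin (k+1)) ℤ)
    (hM : M (Fin.last k) (Fin.last k) ≠ 0) (hk : 1 ≤ k) :
    (chio M).det = M (Fin.last k) (Fin.last k) ^ (k - 1) * M.det := by
  refine mul_left_cancel₀ hM ?_
  rw [mul_det_chio, ← mul_assoc, ← pow_succ', Nat.sub_add_cancel hk]

theorem Dk_chio {n k : ℕ} (L : Matrix (Fin (n+1)) (Fin (n+1)) ℤ)
    (hL : 0 < L (Fin.last n) (Fin.last n)) (hk : 1 ≤ k) :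
    Dk (chio L) k = L (Fin.last n) (Fin.last n) ^ (k - 1) * DkStar L (k+1) := by
  rw [DkStar_succ_eq_gcd_snocLast, ← Int.normalize_of_nonneg (pow_nonneg hL.le _),
    ← Finset.gcd_mul_left]
  refine Finset.gcd_congr rfl fun p _ => ?_
  have hlast : L.submatrix (snocLast p.1) (snocLast p.2) (Fin.last k) (Fin.last k)
      = L (Fin.last n) (Fin.last n) := by
    rw [submatrix_apply, snocLast_last, snocLast_last]
  rw [submatrix_chio, det_chio_of_ne_zero _ (hlast ▸ hL.ne') hk, hlast]

theorem pos_of_diagonal_sub_mulVec_eq_zero {ι R : Type*} [Fintype ι] [DecidableEq ι]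
    [CommRing R] [LinearOrder R] [IsStrictOrderedRing R] {A : Matrix ι ι R} {d r : ι → R}
    (hA : ∀ i j, 0 ≤ A i j) (hr : ∀ i, 0 < r i) (h : (diagonal d - A) *ᵥ r = 0)
    {v w : ι} (hvw : A v w ≠ 0) : 0 < d v := by
  have hrow : d v * r v = ∑ j, A v j * r j := by
    have hv := congrFun h v
    rw [sub_mulVec, Pi.sub_apply, mulVec_diagonal, Pi.zero_apply, sub_eq_zero] at hv
    exact hv
  have hsum : 0 < ∑ j, A v j * r j :=
    Finset.sum_pos' (fun j _ => mul_nonneg (hA v j) (hr j).le)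
      ⟨w, Finset.mem_univ w, mul_pos ((hA v w).lt_of_ne' hvw) (hr w)⟩
  exact pos_of_mul_pos_left (hrow ▸ hsum) (hr v).le

theorem stmt8_general {n : ℕ} (A : Matrix (Fin (n+1)) (Fin (n+1)) ℤ)
    (d r : Fin (n+1) → ℤ)
    (hAsymm : A.IsSymm) (hAloop : ∀ i, A i i = 0) (hAnonneg : ∀ i j, 0 ≤ A i j)
    (hconn : (SimpleGraph.fromRel fun i j => A i j ≠ 0).Connected)
    (hr : ∀ i, 0 < r i)
    (hstruct : (Matrix.diagonal d - A).mulVec r = 0)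
    (k : ℕ) (hk1 : 1 ≤ k) (hk2 : k ≤ n - 1) :
    Dk (chio (Matrix.diagonal d - A)) k
      = d (Fin.last n) ^ (k - 1) * DkStar (Matrix.diagonal d - A) (k + 1) := by
  have : Nontrivial (Fin (n+1)) := Fin.nontrivial_iff_two_le.mpr (by omega)
  obtain ⟨w, hadj⟩ := hconn.preconnected.exists_adj_of_nontrivial (Fin.last n)
  have hAw : A (Fin.last n) w ≠ 0 := by
    obtain ⟨-, h | h⟩ := SimpleGraph.fromRel_adj _ _ _ |>.mp hadj
    exacts [h, hAsymm.apply w (Fin.last n) ▸ h]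
  have hdiag : (diagonal d - A) (Fin.last n) (Fin.last n) = d (Fin.last n) := by
    simp [hAloop]
  rw [← hdiag]
  exact Dk_chio _ (hdiag ▸ pos_of_diagonal_sub_mulVec_eq_zero hAnonneg hr hstruct hAw) hk1

/-- for an arithmetical structure `(d, r)` on a connected loopless
multigraph with `n+1` vertices and adjacency matrix `A`, with `L = diag(d) − A` and `L'`
the Keyes–Reiter (Chio) condensation at the last vertex, one has
`D_k(L') = d_n^{k−1} · D_{k+1}*(L)` for all `k ∈ [(n+1)−2]`. -/
theorem stmt8 {n : ℕ} (A : Matrix (Fin (n+1)) (Fin (n+1)) ℤ)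
    (d r : Fin (n+1) → ℤ)
    (hAsymm : A.IsSymm) (hAloop : ∀ i, A i i = 0) (hAnonneg : ∀ i j, 0 ≤ A i j)
    (hconn : (SimpleGraph.fromRel fun i j => A i j ≠ 0).Connected)
    (hd : ∀ i, 0 ≤ d i) (hr : ∀ i, 0 < r i)
    (hrgcd : Finset.univ.gcd r = 1)
    (hstruct : (Matrix.diagonal d - A).mulVec r = 0)
    (k : ℕ) (hk1 : 1 ≤ k) (hk2 : k ≤ n - 1) :
    Dk (chio (Matrix.diagonal d - A)) k
      = d (Fin.last n) ^ (k - 1) * DkStar (Matrix.diagonal d - A) (k + 1) :=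
  stmt8_general A d r hAsymm hAloop hAnonneg hconn hr hstruct k hk1 hk2
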